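/- Suppose λ₀ is a point of analyticity of M_B; suppose there is r > 0 such that the punctured disc {λ ∈ ℂ : 0 < |λ − λ₀| < r} is contained in ρ(A_B); suppose ρ(Ã_{B*}) has finitely many connected components; and suppose Ã_{B*} is the Hilbert-space adjoint of A_B, i.e. for v, w ∈ H one has v ∈ D(T̃) with Γ̃₁v = B*Γ̃₂v and T̃v = w if and only if ⟨A_B u, v⟩_H = ⟨u, w⟩_H for all u ∈ D(A_B). Then for every Φ in the closure of 𝒮 and every Φ̃ in the closure of 𝒮̃ there exists an analytic function g on the full disc {λ ∈ ℂ : |λ − λ₀| < r} such that g(λ) = ⟨(A_B − λI)^{−1}Φ, Φ̃⟩_H for all λ with 0 < |λ − λ₀| < r. -/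

import Mathlib

/-!
Let `Φ = (A_B - δ)⁻¹ v` and `Φ̃ = (Ã_{B*} - δ̃)⁻¹ ṽ` with `T v = μ₀ v`, `T̃ ṽ = μ̃₀ ṽ`. The vector
`v + (λ - μ₀)(A_B - λ)⁻¹ v` solves `Tu = λu` with the same boundary datum as `v`, so the Green
identity writes `⟪ṽ, (A_B - λ)⁻¹ v⟫` rationally in `λ` and `M_B(λ) f`, `f = Γ₁ v - B Γ₂ v`; with the
resolvent identities, `⟪Φ̃, (A_B - λ)⁻¹ Φ⟫` becomes such an expression whose poles all lie in
`ρ(A_B)`, hence it extends analytically over `λ₀`. This passes to spans by sesquilinearity, and to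
closures because the resolvent is bounded on the circle `|λ - λ₀| = r/2`: by the maximum modulus
principle the extensions then converge uniformly on the closed disc.
-/

open scoped InnerProductSpace

variable {H 𝓗 𝓚 : Type*}
  [NormedAddCommGroup H] [InnerProductSpace ℂ H] [CompleteSpace H]
  [NormedAddCommGroup 𝓗] [InnerProductSpace ℂ 𝓗] [CompleteSpace 𝓗]
  [NormedAddCommGroup 𝓚] [InnerProductSpace ℂ 𝓚] [CompleteSpace 𝓚]

/-- `R` is the (bounded, everywhere defined) inverse of `A_B − λ`, where `A_B` is the
restriction of `T` to `{u ∈ D(T) : Γ₁ u = B (Γ₂ u)}`. -/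
def IsResolventAt (dom : Submodule ℂ H) (T : dom →ₗ[ℂ] H)
    (Γ₁ : dom →ₗ[ℂ] 𝓗) (Γ₂ : dom →ₗ[ℂ] 𝓚) (B : 𝓚 →L[ℂ] 𝓗)
    (lam : ℂ) (R : H →L[ℂ] H) : Prop :=
  (∀ h : H, ∃ hm : R h ∈ dom,
      Γ₁ ⟨R h, hm⟩ = B (Γ₂ ⟨R h, hm⟩) ∧ T ⟨R h, hm⟩ - lam • R h = h) ∧
  (∀ u : dom, Γ₁ u = B (Γ₂ u) → R (T u - lam • (u : H)) = (u : H))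

/-- The resolvent set `ρ(A_B)`. -/
def resolventSetB (dom : Submodule ℂ H) (T : dom →ₗ[ℂ] H)
    (Γ₁ : dom →ₗ[ℂ] 𝓗) (Γ₂ : dom →ₗ[ℂ] 𝓚) (B : 𝓚 →L[ℂ] 𝓗) : Set ℂ :=
  {lam | ∃ R : H →L[ℂ] H, IsResolventAt dom T Γ₁ Γ₂ B lam R}

/-- The space `𝒮 = Span_{δ ∉ σ(A_B)} (A_B − δ)⁻¹ Ran (S_{μ₀,B})`. -/
def spaceS (dom : Submodule ℂ H) (T : dom →ₗ[ℂ] H)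
    (Γ₁ : dom →ₗ[ℂ] 𝓗) (Γ₂ : dom →ₗ[ℂ] 𝓚) (B : 𝓚 →L[ℂ] 𝓗) (μ₀ : ℂ) :
    Submodule ℂ H :=
  Submodule.span ℂ {x : H | ∃ (δ : ℂ) (R : H →L[ℂ] H) (v : dom),
    IsResolventAt dom T Γ₁ Γ₂ B δ R ∧ T v = μ₀ • (v : H) ∧ x = R (v : H)}

/-- The space `𝒯 = Span_{μ ∉ σ(A_B)} Ran (S_{μ,B})`. -/
def spaceT (dom : Submodule ℂ H) (T : dom →ₗ[ℂ] H)
    (Γ₁ : dom →ₗ[ℂ] 𝓗) (Γ₂ : dom →ₗ[ℂ] 𝓚) (B : 𝓚 →L[ℂ] 𝓗) :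
    Submodule ℂ H :=
  Submodule.span ℂ {x : H | ∃ (μ : ℂ) (hx : x ∈ dom),
    μ ∈ resolventSetB dom T Γ₁ Γ₂ B ∧ T ⟨x, hx⟩ = μ • x}

/-- `lam₀` is a point of analyticity of the Weyl function `M_B`: on some open
neighbourhood `U` of `lam₀`, for each `f ∈ Ran(Γ₁ − BΓ₂)` there is an analytic
function agreeing with `M_B(·) f` on `U ∩ ρ(A_B)`. -/
def MAnalyticAt (dom : Submodule ℂ H) (T : dom →ₗ[ℂ] H)
    (Γ₁ : dom →ₗ[ℂ] 𝓗) (Γ₂ : dom →ₗ[ℂ] 𝓚) (B : 𝓚 →L[ℂ] 𝓗) (lam₀ : ℂ) : Prop :=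
  ∃ U : Set ℂ, IsOpen U ∧ lam₀ ∈ U ∧
    ∀ f ∈ Set.range (fun u : dom => Γ₁ u - B (Γ₂ u)),
      ∃ m : ℂ → 𝓚, (∀ z ∈ U, AnalyticAt ℂ m z) ∧
        ∀ lam ∈ U ∩ resolventSetB dom T Γ₁ Γ₂ B,
          ∀ u : dom, (T u = lam • (u : H) ∧ Γ₁ u - B (Γ₂ u) = f) → m lam = Γ₂ u

open Filter Topology Metric Set ContinuousLinearMap
open scoped InnerProduct ComplexConjugate

section RemovableSingularity

variable {E : Type*} [NormedAddCommGroup E] [NormedSpace ℂ E]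

def removableAt (c : ℂ) : Submodule ℂ (ℂ → E) where
  carrier := {f | ∃ g, AnalyticAt ℂ g c ∧ f =ᶠ[𝓝[≠] c] g}
  add_mem' := fun ⟨g, hg, hfg⟩ ⟨g', hg', hfg'⟩ => ⟨g + g', hg.add hg', hfg.add hfg'⟩
  zero_mem' := ⟨0, analyticAt_const, EventuallyEq.rfl⟩
  smul_mem' a := by
    rintro _ ⟨g, hg, hfg⟩
    exact ⟨a • g, hg.const_smul, hfg.const_smul a⟩

variable {c : ℂ} {f f' : ℂ → E}

theorem mem_removableAt_of_analyticAt (hf : AnalyticAt ℂ f c) : f ∈ removableAt c :=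
  ⟨f, hf, EventuallyEq.rfl⟩

theorem mem_removableAt_of_eventuallyEq (h : f =ᶠ[𝓝[≠] c] f') (hf' : f' ∈ removableAt c) :
    f ∈ removableAt c :=
  let ⟨g, hg, hfg⟩ := hf'
  ⟨g, hg, h.trans hfg⟩

theorem smul_mem_removableAt {a : ℂ → ℂ} (ha : AnalyticAt ℂ a c) (hf : f ∈ removableAt c) :
    a • f ∈ removableAt c :=
  let ⟨g, hg, hfg⟩ := hf
  ⟨a • g, ha.smul hg, EventuallyEq.rfl.smul hfg⟩

theorem UniformCauchySeqOn.closure_of_frontier {V : Type*} [NormedAddCommGroup V]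
    [NormedSpace ℂ V] [Nontrivial V] {G : ℕ → V → E} {U : Set V} (hU : Bornology.IsBounded U)
    (hG : ∀ n, DiffContOnCl ℂ (G n) U) (h : UniformCauchySeqOn G atTop (frontier U)) :
    UniformCauchySeqOn G atTop (closure U) := by
  rw [Metric.uniformCauchySeqOn_iff] at h ⊢
  intro ε hε
  obtain ⟨N, hN⟩ := h (ε / 2) (half_pos hε)
  refine ⟨N, fun m hm n hn z hz => ?_⟩
  rw [dist_eq_norm]
  refine (Complex.norm_le_of_forall_mem_frontier_norm_le hU ((hG m).sub (hG n))
    (fun w hw => ?_) hz).trans_lt (half_lt_self hε)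
  simpa [dist_eq_norm] using (hN m hm n hn w hw).le

variable [CompleteSpace E]

theorem exists_analyticOnNhd_eqOn_of_mem_removableAt {U : Set ℂ} (hU : IsOpen U)
    (hf : f ∈ removableAt c) (hd : DifferentiableOn ℂ f (U \ {c})) :
    ∃ g, AnalyticOnNhd ℂ g U ∧ EqOn g f (U \ {c}) := by
  classical
  obtain ⟨g₀, hg₀, hfg₀⟩ := hf
  have hne : ∀ z ≠ c, Function.update f c (g₀ c) z = f z := fun z hz =>
    Function.update_of_ne hz _ _
  refine ⟨Function.update f c (g₀ c), fun z hz => ?_, fun z hz => hne z hz.2⟩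
  obtain rfl | hzc := eq_or_ne z c
  · refine hg₀.congr ?_
    filter_upwards [eventually_nhdsWithin_iff.1 hfg₀] with x hx
    obtain rfl | hxz := eq_or_ne x z
    · simp
    · rw [hne x hxz, hx hxz]
  · have hUc : U \ {c} ∈ 𝓝 z := (hU.sdiff isClosed_singleton).mem_nhds ⟨hz, hzc⟩
    refine (hd.analyticAt hUc).congr ?_
    filter_upwards [isOpen_compl_singleton.mem_nhds hzc] with x hx
    exact (hne x hx).symm

/-- By the maximum modulus principle, uniform convergence on the circle forces uniform
convergence of the analytic extensions on the closed disc. -/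
theorem mem_removableAt_of_tendstoUniformlyOn_sphere {F : ℕ → ℂ → E} {r R : ℝ} (hr : 0 < r)
    (hrR : r < R) (hF : ∀ n, F n ∈ removableAt c)
    (hFd : ∀ n, DifferentiableOn ℂ (F n) (ball c R \ {c}))
    (hunif : TendstoUniformlyOn F f atTop (sphere c r))
    (hpt : ∀ z ∈ ball c r \ {c}, Tendsto (fun n => F n z) atTop (𝓝 (f z))) :
    f ∈ removableAt c := by
  choose G hG hGF using fun n =>
    exists_analyticOnNhd_eqOn_of_mem_removableAt isOpen_ball (hF n) (hFd n)
  have hcb : closedBall c r ⊆ ball c R := closedBall_subset_ball hrR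
  have hsphere : sphere c r ⊆ ball c R \ {c} := fun z hz =>
    ⟨hcb (sphere_subset_closedBall hz), ne_of_mem_sphere hz hr.ne'⟩
  have hCauchy : UniformCauchySeqOn G atTop (closedBall c r) := by
    rw [← closure_ball c hr.ne']
    refine UniformCauchySeqOn.closure_of_frontier isBounded_ball
      (fun n => (hG n).differentiableOn.diffContOnCl_ball hcb) ?_
    rw [frontier_ball c hr.ne']
    exact (hunif.congr (Eventually.of_forall fun n => ((hGF n).mono hsphere).symm))
      |>.uniformCauchySeqOn
  set g := fun z => limUnder atTop fun n => G n z
  have hg : TendstoUniformlyOn G g atTop (closedBall c r) :=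
    hCauchy.tendstoUniformlyOn_of_tendsto fun z hz =>
      tendsto_nhds_limUnder (cauchySeq_tendsto_of_complete (hCauchy.cauchySeq hz))
  have hgd : DifferentiableOn ℂ g (ball c r) :=
    (hg.mono ball_subset_closedBall).tendstoLocallyUniformlyOn.differentiableOn
      (Eventually.of_forall fun n => ((hG n).mono ((ball_subset_closedBall).trans hcb))
        |>.differentiableOn) isOpen_ball
  refine ⟨g, hgd.analyticAt (ball_mem_nhds c hr), ?_⟩
  filter_upwards [sdiff_mem_nhdsWithin_compl (ball_mem_nhds c hr) {c}] with z hz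
  refine tendsto_nhds_unique (hpt z hz) ((hg.tendsto_at (ball_subset_closedBall hz.1)).congr ?_)
  exact fun n => hGF n ⟨ball_subset_ball hrR.le hz.1, hz.2⟩

end RemovableSingularity

theorem LinearMap.apply_mem_of_mem_span₂ {R M N P : Type*} [CommSemiring R] [AddCommMonoid M]
    [AddCommMonoid N] [AddCommMonoid P] [Module R M] [Module R N] [Module R P] {σ : R →+* R}
    (f : M →ₛₗ[σ] N →ₗ[R] P) {p : Submodule R P} {s : Set M} {t : Set N}
    (h : ∀ m ∈ s, ∀ n ∈ t, f m n ∈ p) {m : M} {n : N} (hm : m ∈ Submodule.span R s)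
    (hn : n ∈ Submodule.span R t) : f m n ∈ p := by
  have ht : ∀ m ∈ s, Submodule.span R t ≤ p.comap (f m) := fun m hm => Submodule.span_le.2 (h m hm)
  exact Submodule.span_le (p := p.comap (f.flip n)) |>.2 (fun m hm => ht m hm hn) hm

section ResolventB

omit [CompleteSpace H] [CompleteSpace 𝓗] [CompleteSpace 𝓚]

namespace IsResolventAt

variable {dom : Submodule ℂ H} {T : dom →ₗ[ℂ] H} {Γ₁ : dom →ₗ[ℂ] 𝓗} {Γ₂ : dom →ₗ[ℂ] 𝓚}
  {B : 𝓚 →L[ℂ] 𝓗} {lam mu : ℂ} {R S : H →L[ℂ] H}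

theorem unique (hR : IsResolventAt dom T Γ₁ Γ₂ B lam R)
    (hS : IsResolventAt dom T Γ₁ Γ₂ B lam S) : R = S := by
  ext x
  obtain ⟨hm, hbc, hx⟩ := hS.1 x
  simpa [hx] using hR.2 ⟨S x, hm⟩ hbc

theorem sub_eq_smul_comp (hR : IsResolventAt dom T Γ₁ Γ₂ B lam R)
    (hS : IsResolventAt dom T Γ₁ Γ₂ B mu S) : R - S = (lam - mu) • R ∘L S := by
  ext x
  obtain ⟨hm, hbc, hx⟩ := hS.1 x
  have h := hR.2 ⟨S x, hm⟩ hbc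
  rw [Submodule.coe_mk, eq_add_of_sub_eq hx,
    show x + mu • S x - lam • S x = x - (lam - mu) • S x by module, map_sub, map_smul] at h
  simp only [sub_apply, smul_apply, comp_apply]
  calc R x - S x = R x - (R x - (lam - mu) • R (S x)) := by rw [h]
    _ = (lam - mu) • R (S x) := by abel

theorem apply_sub_apply (hR : IsResolventAt dom T Γ₁ Γ₂ B lam R)
    (hS : IsResolventAt dom T Γ₁ Γ₂ B mu S) (x : H) : R x - S x = (lam - mu) • R (S x) := by
  simpa using congrArg (· x) (hR.sub_eq_smul_comp hS)

theorem norm_le_two_mul (hR : IsResolventAt dom T Γ₁ Γ₂ B lam R)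
    (hS : IsResolventAt dom T Γ₁ Γ₂ B mu S) (h : ‖lam - mu‖ * ‖S‖ ≤ 1 / 2) :
    ‖R‖ ≤ 2 * ‖S‖ := by
  have key : ‖R‖ ≤ ‖S‖ + ‖lam - mu‖ * ‖S‖ * ‖R‖ :=
    calc ‖R‖ = ‖S + (lam - mu) • R ∘L S‖ := by rw [← hR.sub_eq_smul_comp hS, add_sub_cancel]
      _ ≤ ‖S‖ + ‖lam - mu‖ * (‖R‖ * ‖S‖) :=
        (norm_add_le _ _).trans (by grw [norm_smul, opNorm_comp_le])
      _ = ‖S‖ + ‖lam - mu‖ * ‖S‖ * ‖R‖ := by ring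
  nlinarith [norm_nonneg R]

theorem apply_apply_eq (hR : IsResolventAt dom T Γ₁ Γ₂ B lam R)
    (hS : IsResolventAt dom T Γ₁ Γ₂ B mu S) (hne : lam ≠ mu) (x : H) :
    R (S x) = (lam - mu)⁻¹ • (R x - S x) := by
  rw [hR.apply_sub_apply hS, smul_smul, inv_mul_cancel₀ (sub_ne_zero.2 hne), one_smul]

theorem exists_of_eq_apply (hR : IsResolventAt dom T Γ₁ Γ₂ B mu R) {y z : H} (hy : y = R z) :
    ∃ hm : y ∈ dom, Γ₁ ⟨y, hm⟩ = B (Γ₂ ⟨y, hm⟩) ∧ T ⟨y, hm⟩ - mu • y = z := by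
  subst hy
  exact hR.1 z

theorem of_sub_eq_smul_comp (hR : IsResolventAt dom T Γ₁ Γ₂ B mu R)
    (hSR : S - R = (lam - mu) • R ∘L S)
    (hleft : ∀ u : dom, Γ₁ u = B (Γ₂ u) → S (T u - lam • (u : H)) = u) :
    IsResolventAt dom T Γ₁ Γ₂ B lam S := by
  refine ⟨fun x => ?_, hleft⟩
  have hx : S x = R (x + (lam - mu) • S x) := by
    simpa [sub_eq_iff_eq_add'] using congrArg (· x) hSR
  obtain ⟨hm, hbc, hT⟩ := hR.exists_of_eq_apply hx
  exact ⟨hm, hbc, by linear_combination (norm := module) hT⟩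

theorem exists_eigenvector (hR : IsResolventAt dom T Γ₁ Γ₂ B lam R) (v : dom)
    (hv : T v = mu • (v : H)) :
    ∃ u : dom, (u : H) = v + (lam - mu) • R v ∧ T u = lam • (u : H) ∧
      Γ₁ u - B (Γ₂ u) = Γ₁ v - B (Γ₂ v) := by
  obtain ⟨hm, hbc, hT⟩ := hR.1 v
  refine ⟨v + (lam - mu) • ⟨R v, hm⟩, rfl, ?_, ?_⟩
  · simp only [map_add, map_smul, hv, eq_add_of_sub_eq hT, Submodule.coe_add,
      Submodule.coe_smul]
    module
  · simp only [map_add, map_smul, hbc]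
    abel

end IsResolventAt

variable (dom : Submodule ℂ H) (T : dom →ₗ[ℂ] H) (Γ₁ : dom →ₗ[ℂ] 𝓗) (Γ₂ : dom →ₗ[ℂ] 𝓚)
  (B : 𝓚 →L[ℂ] 𝓗)

open Classical in
noncomputable def resolventB (lam : ℂ) : H →L[ℂ] H :=
  if h : lam ∈ resolventSetB dom T Γ₁ Γ₂ B then h.choose else 0

noncomputable def weakResolventB : H →ₗ⋆[ℂ] H →ₗ[ℂ] ℂ → ℂ :=
  LinearMap.mk₂'ₛₗ (starRingEnd ℂ) (RingHom.id ℂ)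
    (fun w x lam => ⟪w, resolventB dom T Γ₁ Γ₂ B lam x⟫_ℂ)
    (fun _ _ _ => funext fun _ => inner_add_left _ _ _)
    (fun _ _ _ => funext fun _ => inner_smul_left _ _ _)
    (fun _ _ _ => funext fun _ => by simp only [map_add, inner_add_right, Pi.add_apply])
    (fun _ _ _ => funext fun _ => by simp)

variable {dom T Γ₁ Γ₂ B} {c : ℂ}

theorem weakResolventB_apply (w x : H) (lam : ℂ) :
    weakResolventB dom T Γ₁ Γ₂ B w x lam = ⟪w, resolventB dom T Γ₁ Γ₂ B lam x⟫_ℂ :=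
  rfl

theorem isResolventAt_resolventB {lam : ℂ} (h : lam ∈ resolventSetB dom T Γ₁ Γ₂ B) :
    IsResolventAt dom T Γ₁ Γ₂ B lam (resolventB dom T Γ₁ Γ₂ B lam) := by
  rw [resolventB, dif_pos h]
  exact h.choose_spec

theorem continuousAt_resolventB {mu : ℂ} (h : resolventSetB dom T Γ₁ Γ₂ B ∈ 𝓝 mu) :
    ContinuousAt (resolventB dom T Γ₁ Γ₂ B) mu := by
  set S := resolventB dom T Γ₁ Γ₂ B mu
  have hS := isResolventAt_resolventB (mem_of_mem_nhds h)
  have hsmall : ∀ᶠ lam in 𝓝 mu, ‖lam - mu‖ * ‖S‖ < 1 / 2 := by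
    have : Tendsto (fun lam => ‖lam - mu‖ * ‖S‖) (𝓝 mu) (𝓝 0) :=
      (by fun_prop : Continuous fun lam : ℂ => ‖lam - mu‖ * ‖S‖).tendsto' mu 0 (by simp)
    exact this.eventually (gt_mem_nhds (by norm_num))
  rw [ContinuousAt, tendsto_iff_norm_sub_tendsto_zero]
  refine squeeze_zero' (Eventually.of_forall fun _ => norm_nonneg _) ?_
    ((by fun_prop : Continuous fun lam : ℂ => ‖lam - mu‖ * (2 * ‖S‖ * ‖S‖)).tendsto' mu 0
      (by simp))
  filter_upwards [h, hsmall] with lam hlam hlt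
  have hR := isResolventAt_resolventB hlam
  calc ‖resolventB dom T Γ₁ Γ₂ B lam - S‖
      ≤ ‖lam - mu‖ * (‖resolventB dom T Γ₁ Γ₂ B lam‖ * ‖S‖) := by
        rw [hR.sub_eq_smul_comp hS, norm_smul]; grw [opNorm_comp_le]
    _ ≤ ‖lam - mu‖ * (2 * ‖S‖ * ‖S‖) := by grw [hR.norm_le_two_mul hS hlt.le]

theorem hasDerivAt_resolventB {mu : ℂ} (h : resolventSetB dom T Γ₁ Γ₂ B ∈ 𝓝 mu) :
    HasDerivAt (resolventB dom T Γ₁ Γ₂ B)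
      (resolventB dom T Γ₁ Γ₂ B mu ∘L resolventB dom T Γ₁ Γ₂ B mu) mu := by
  set S := resolventB dom T Γ₁ Γ₂ B mu
  have hS := isResolventAt_resolventB (mem_of_mem_nhds h)
  rw [hasDerivAt_iff_tendsto_slope]
  have hslope : ∀ᶠ lam in 𝓝[≠] mu,
      resolventB dom T Γ₁ Γ₂ B lam ∘L S = slope (resolventB dom T Γ₁ Γ₂ B) mu lam := by
    filter_upwards [nhdsWithin_le_nhds h, self_mem_nhdsWithin] with lam hlam hne
    rw [slope_def_module, (isResolventAt_resolventB hlam).sub_eq_smul_comp hS,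
      smul_smul, inv_mul_cancel₀ (sub_ne_zero.2 hne), one_smul]
  exact (((continuousAt_resolventB h).clm_comp continuousAt_const).tendsto.mono_left
    nhdsWithin_le_nhds).congr' hslope

theorem differentiableOn_weakResolventB (w x : H) {U : Set ℂ} (hU : IsOpen U)
    (hsub : U ⊆ resolventSetB dom T Γ₁ Γ₂ B) :
    DifferentiableOn ℂ (weakResolventB dom T Γ₁ Γ₂ B w x) U := fun z hz =>
  (((innerSL ℂ w).comp (apply ℂ H x)).hasFDerivAt.comp_hasDerivAt z
    (hasDerivAt_resolventB (mem_of_superset (hU.mem_nhds hz) hsub))).differentiableAt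
    |>.differentiableWithinAt

theorem tendstoUniformlyOn_weakResolventB {K : Set ℂ} (hK : IsCompact K)
    (hKρ : ∀ z ∈ K, resolventSetB dom T Γ₁ Γ₂ B ∈ 𝓝 z) {w x : ℕ → H} {w₀ x₀ : H}
    (hw : Tendsto w atTop (𝓝 w₀)) (hx : Tendsto x atTop (𝓝 x₀)) :
    TendstoUniformlyOn (fun n => weakResolventB dom T Γ₁ Γ₂ B (w n) (x n))
      (weakResolventB dom T Γ₁ Γ₂ B w₀ x₀) atTop K := by
  obtain ⟨M, hM⟩ := hK.exists_bound_of_continuousOn fun z hz =>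
    (continuousAt_resolventB (hKρ z hz)).continuousWithinAt
  have hlim : Tendsto (fun n => M * (‖w₀ - w n‖ * ‖x₀‖ + ‖w n‖ * ‖x₀ - x n‖)) atTop (𝓝 0) := by
    convert (((tendsto_const_nhds.sub hw).norm.mul_const _).add
      (hw.norm.mul (tendsto_const_nhds.sub hx).norm)).const_mul M using 2
    simp
  rw [Metric.tendstoUniformlyOn_iff]
  intro ε hε
  filter_upwards [hlim.eventually (gt_mem_nhds hε)] with n hn z hz
  refine lt_of_le_of_lt ?_ hn
  set R := resolventB dom T Γ₁ Γ₂ B z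
  have hR : ‖R‖ ≤ M := hM z hz
  calc dist ⟪w₀, R x₀⟫_ℂ ⟪w n, R (x n)⟫_ℂ
      = ‖⟪w₀ - w n, R x₀⟫_ℂ + ⟪w n, R (x₀ - x n)⟫_ℂ‖ := by
        rw [dist_eq_norm, inner_sub_left, map_sub, inner_sub_right]; ring_nf
    _ ≤ ‖w₀ - w n‖ * (M * ‖x₀‖) + ‖w n‖ * (M * ‖x₀ - x n‖) := by
        grw [norm_add_le, norm_inner_le_norm, norm_inner_le_norm, le_opNorm, le_opNorm, hR]
    _ = M * (‖w₀ - w n‖ * ‖x₀‖ + ‖w n‖ * ‖x₀ - x n‖) := by ring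

theorem weakResolventB_mem_removableAt_of_mem_closure {r : ℝ} (hr : 0 < r)
    (hpunct : ball c r \ {c} ⊆ resolventSetB dom T Γ₁ Γ₂ B) {s t : Set H}
    (h : ∀ w ∈ s, ∀ x ∈ t, weakResolventB dom T Γ₁ Γ₂ B w x ∈ removableAt c) {w x : H}
    (hw : w ∈ closure s) (hx : x ∈ closure t) :
    weakResolventB dom T Γ₁ Γ₂ B w x ∈ removableAt c := by
  obtain ⟨ws, hws, hwlim⟩ := mem_closure_iff_seq_limit.1 hw
  obtain ⟨xs, hxs, hxlim⟩ := mem_closure_iff_seq_limit.1 hx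
  have hO : IsOpen (ball c r \ {c}) := isOpen_ball.sdiff isClosed_singleton
  have hρ : ∀ z ∈ ball c r \ {c}, resolventSetB dom T Γ₁ Γ₂ B ∈ 𝓝 z := fun z hz =>
    mem_of_superset (hO.mem_nhds hz) hpunct
  refine mem_removableAt_of_tendstoUniformlyOn_sphere (half_pos hr) (half_lt_self hr)
    (fun n => h _ (hws n) _ (hxs n))
    (fun n => differentiableOn_weakResolventB _ _ hO hpunct)
    (tendstoUniformlyOn_weakResolventB (isCompact_sphere c (r / 2)) (fun z hz => hρ z
      ⟨sphere_subset_closedBall.trans (closedBall_subset_ball (half_lt_self hr)) hz,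
        ne_of_mem_sphere hz (half_pos hr).ne'⟩) hwlim hxlim) fun z _ => ?_
  exact hwlim.inner (((resolventB dom T Γ₁ Γ₂ B z).continuous.tendsto x).comp hxlim)

theorem weakResolventB_apply_resolvent_mem_removableAt
    (hρ : resolventSetB dom T Γ₁ Γ₂ B ∈ 𝓝[≠] c) {δ : ℂ} {Rδ : H →L[ℂ] H}
    (hRδ : IsResolventAt dom T Γ₁ Γ₂ B δ Rδ) (hδ : δ ≠ c) {w x : H}
    (h : weakResolventB dom T Γ₁ Γ₂ B w x ∈ removableAt c) :
    weakResolventB dom T Γ₁ Γ₂ B w (Rδ x) ∈ removableAt c := by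
  have ha : AnalyticAt ℂ (fun lam => (lam - δ)⁻¹) c := by
    fun_prop (disch := exact sub_ne_zero.2 hδ.symm)
  refine mem_removableAt_of_eventuallyEq ?_ (smul_mem_removableAt ha
    (sub_mem h (mem_removableAt_of_analyticAt (analyticAt_const (v := ⟪w, Rδ x⟫_ℂ)))))
  filter_upwards [hρ, nhdsWithin_le_nhds (isOpen_compl_singleton.mem_nhds hδ.symm)]
    with lam hlam hlamδ
  simp only [weakResolventB_apply, smul_eq_mul, Pi.mul_apply, Pi.sub_apply,
    (isResolventAt_resolventB hlam).apply_apply_eq hRδ hlamδ, inner_smul_right, inner_sub_right]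

end ResolventB

/-- `Ã_{B*} = (A_B)*`. -/
def IsAdjointB (dom : Submodule ℂ H) (T : dom →ₗ[ℂ] H) (Γ₁ : dom →ₗ[ℂ] 𝓗)
    (Γ₂ : dom →ₗ[ℂ] 𝓚) (B : 𝓚 →L[ℂ] 𝓗) (domt : Submodule ℂ H) (Tt : domt →ₗ[ℂ] H)
    (Γt₁ : domt →ₗ[ℂ] 𝓚) (Γt₂ : domt →ₗ[ℂ] 𝓗) : Prop :=
  ∀ v w : H,
    (∃ hv : v ∈ domt, Γt₁ ⟨v, hv⟩ = (B†) (Γt₂ ⟨v, hv⟩) ∧ Tt ⟨v, hv⟩ = w) ↔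
      ∀ u : dom, Γ₁ u = B (Γ₂ u) → ⟪v, T u⟫_ℂ = ⟪w, (u : H)⟫_ℂ

namespace IsResolventAt

variable {dom : Submodule ℂ H} {T : dom →ₗ[ℂ] H} {Γ₁ : dom →ₗ[ℂ] 𝓗} {Γ₂ : dom →ₗ[ℂ] 𝓚}
  {B : 𝓚 →L[ℂ] 𝓗} {domt : Submodule ℂ H} {Tt : domt →ₗ[ℂ] H} {Γt₁ : domt →ₗ[ℂ] 𝓚}
  {Γt₂ : domt →ₗ[ℂ] 𝓗} {lam mu : ℂ} {R S : H →L[ℂ] H}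

theorem adjoint (hadj : IsAdjointB dom T Γ₁ Γ₂ B domt Tt Γt₁ Γt₂)
    (hR : IsResolventAt dom T Γ₁ Γ₂ B mu R) :
    IsResolventAt domt Tt Γt₁ Γt₂ (B†) (conj mu) (R†) := by
  have hRT : ∀ u : dom, Γ₁ u = B (Γ₂ u) → R (T u) = u + mu • R u := fun u hu =>
    eq_add_of_sub_eq (by simpa using hR.2 u hu)
  constructor
  · intro x
    obtain ⟨hv, hbc, hT⟩ := (hadj ((R†) x) (x + conj mu • (R†) x)).2
      fun u hu => by
        rw [adjoint_inner_left, hRT u hu, inner_add_left, inner_add_right, inner_smul_left,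
          inner_smul_right, adjoint_inner_left, RCLike.conj_conj]
    exact ⟨hv, hbc, by rw [hT, add_sub_cancel_right]⟩
  · intro v hv
    refine ext_inner_right ℂ fun y => ?_
    obtain ⟨hm, hbc, hT⟩ := hR.1 y
    have h := (hadj v (Tt v)).1 ⟨v.2, hv, rfl⟩ ⟨R y, hm⟩ hbc
    rw [Submodule.coe_mk, eq_add_of_sub_eq hT, inner_add_right, inner_smul_right] at h
    rw [adjoint_inner_left, inner_sub_left, ← h, inner_smul_left, RCLike.conj_conj]
    ring

theorem of_adjoint (hadj : IsAdjointB dom T Γ₁ Γ₂ B domt Tt Γt₁ Γt₂)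
    (hR : IsResolventAt dom T Γ₁ Γ₂ B mu R)
    (hS : IsResolventAt domt Tt Γt₁ Γt₂ (B†) lam S) :
    IsResolventAt dom T Γ₁ Γ₂ B (conj lam) (S†) := by
  refine hR.of_sub_eq_smul_comp ?_ fun u hu => ?_
  · -- the adjoint of the resolvent identity for `S` and `R†` shows `range S† ⊆ range R ⊆ D(A_B)`
    have h := congrArg ContinuousLinearMap.adjoint (hS.sub_eq_smul_comp (hR.adjoint hadj))
    simpa [adjoint_comp, map_smulₛₗ] using h
  · refine ext_inner_left ℂ fun x => ?_
    obtain ⟨hm, hbc, hT⟩ := hS.1 x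
    have h := (hadj (S x) (x + lam • S x)).1 ⟨hm, hbc, eq_add_of_sub_eq hT⟩ u hu
    rw [adjoint_inner_right, inner_sub_right, h, inner_add_left, inner_smul_left,
      inner_smul_right]
    ring

end IsResolventAt

section BoundaryTriple

variable {dom : Submodule ℂ H} {T : dom →ₗ[ℂ] H} {Γ₁ : dom →ₗ[ℂ] 𝓗} {Γ₂ : dom →ₗ[ℂ] 𝓚}
  {B : 𝓚 →L[ℂ] 𝓗} {domt : Submodule ℂ H} {Tt : domt →ₗ[ℂ] H} {Γt₁ : domt →ₗ[ℂ] 𝓚}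
  {Γt₂ : domt →ₗ[ℂ] 𝓗} {c : ℂ}

omit [CompleteSpace H] in
theorem mul_inner_eq_of_green
    (hGreen : ∀ (u : dom) (v : domt),
      ⟪(v : H), T u⟫_ℂ - ⟪Tt v, (u : H)⟫_ℂ = ⟪Γt₂ v, Γ₁ u⟫_ℂ - ⟪Γt₁ v, Γ₂ u⟫_ℂ)
    {lam mu : ℂ} {u : dom} {v : domt} (hu : T u = lam • (u : H)) (hv : Tt v = mu • (v : H)) :
    (lam - conj mu) * ⟪(v : H), (u : H)⟫_ℂ =
      ⟪Γt₂ v, Γ₁ u - B (Γ₂ u)⟫_ℂ + ⟪(B†) (Γt₂ v) - Γt₁ v, Γ₂ u⟫_ℂ := by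
  have h := hGreen u v
  rw [hu, hv, inner_smul_right, inner_smul_left] at h
  rw [inner_sub_right, inner_sub_left, adjoint_inner_left]
  linear_combination h

omit [CompleteSpace 𝓗] [CompleteSpace 𝓚] in
theorem weakResolventB_adjoint_resolvent_mem_removableAt
    (hρ : resolventSetB dom T Γ₁ Γ₂ B ∈ 𝓝[≠] c) {δ : ℂ} {Rδ : H →L[ℂ] H}
    (hRδ : IsResolventAt dom T Γ₁ Γ₂ B δ Rδ) (hδ : δ ≠ c) {w x : H}
    (h : weakResolventB dom T Γ₁ Γ₂ B w x ∈ removableAt c) :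
    weakResolventB dom T Γ₁ Γ₂ B ((Rδ†) w) x ∈ removableAt c := by
  have ha : AnalyticAt ℂ (fun lam => (δ - lam)⁻¹) c := by
    fun_prop (disch := exact sub_ne_zero.2 hδ)
  refine mem_removableAt_of_eventuallyEq ?_ (smul_mem_removableAt ha
    (sub_mem (mem_removableAt_of_analyticAt (analyticAt_const (v := ⟪w, Rδ x⟫_ℂ))) h))
  filter_upwards [hρ, nhdsWithin_le_nhds (isOpen_compl_singleton.mem_nhds hδ.symm)]
    with lam hlam hlamδ
  simp only [weakResolventB_apply, smul_eq_mul, Pi.mul_apply, Pi.sub_apply, adjoint_inner_left,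
    hRδ.apply_apply_eq (isResolventAt_resolventB hlam) (Ne.symm hlamδ), inner_smul_right,
    inner_sub_right]

omit [CompleteSpace H] in
/-- The Green identity expresses `⟪ṽ, (A_B - λ)⁻¹ v⟫` through `M_B(λ)`, so the analyticity of
`M_B` at `c` passes to the weak resolvent on eigenvectors. -/
theorem weakResolventB_eigenvector_mem_removableAt
    (hGreen : ∀ (u : dom) (v : domt),
      ⟪(v : H), T u⟫_ℂ - ⟪Tt v, (u : H)⟫_ℂ = ⟪Γt₂ v, Γ₁ u⟫_ℂ - ⟪Γt₁ v, Γ₂ u⟫_ℂ)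
    (hM : MAnalyticAt dom T Γ₁ Γ₂ B c) (hρ : resolventSetB dom T Γ₁ Γ₂ B ∈ 𝓝[≠] c)
    {μ μt : ℂ} (hμ : μ ≠ c) (hμt : conj μt ≠ c)
    {v : dom} (hv : T v = μ • (v : H)) {vt : domt} (hvt : Tt vt = μt • (vt : H)) :
    weakResolventB dom T Γ₁ Γ₂ B vt v ∈ removableAt c := by
  obtain ⟨U, hU, hcU, hMU⟩ := hM
  obtain ⟨m, hm, hmΓ⟩ := hMU _ ⟨v, rfl⟩
  set q := (B†) (Γt₂ vt) - Γt₁ vt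
  have hqm : AnalyticAt ℂ (fun lam => ⟪q, m lam⟫_ℂ) c :=
    ((innerSL ℂ q).analyticAt _).comp (hm c hcU)
  refine mem_removableAt_of_eventuallyEq (f' := fun lam => (lam - μ)⁻¹ *
      ((lam - conj μt)⁻¹ * (⟪Γt₂ vt, Γ₁ v - B (Γ₂ v)⟫_ℂ + ⟪q, m lam⟫_ℂ) -
        ⟪(vt : H), (v : H)⟫_ℂ)) ?_
    (mem_removableAt_of_analyticAt (by fun_prop (disch := exact sub_ne_zero.2 (Ne.symm ‹_›))))
  filter_upwards [hρ, nhdsWithin_le_nhds (hU.mem_nhds hcU),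
    nhdsWithin_le_nhds (isOpen_compl_singleton.mem_nhds hμ.symm),
    nhdsWithin_le_nhds (isOpen_compl_singleton.mem_nhds hμt.symm)]
    with lam hlam hlamU hlamμ hlamμt
  obtain ⟨u, hu, hTu, hΓu⟩ := (isResolventAt_resolventB hlam).exists_eigenvector v hv
  have hgreen := mul_inner_eq_of_green (B := B) hGreen hTu hvt
  rw [hΓu, ← hmΓ lam ⟨hlamU, hlam⟩ u ⟨hTu, hΓu⟩, hu, inner_add_right, inner_smul_right] at hgreen
  rw [weakResolventB_apply, ← hgreen]
  field_simp [sub_ne_zero.2 hlamμ, sub_ne_zero.2 hlamμt]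
  ring

/-- Resolvent identities reduce the generators of `𝒮` and `𝒮̃` to eigenvectors; the adjoint of a
resolvent of `Ã_{B*}` is a resolvent of `A_B`, so all poles introduced lie in `ρ(A_B)`. -/
theorem weakResolventB_mem_removableAt_of_mem_spaceS
    (hGreen : ∀ (u : dom) (v : domt),
      ⟪(v : H), T u⟫_ℂ - ⟪Tt v, (u : H)⟫_ℂ = ⟪Γt₂ v, Γ₁ u⟫_ℂ - ⟪Γt₁ v, Γ₂ u⟫_ℂ)
    (hadj : IsAdjointB dom T Γ₁ Γ₂ B domt Tt Γt₁ Γt₂)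
    (hM : MAnalyticAt dom T Γ₁ Γ₂ B c) (hρ : resolventSetB dom T Γ₁ Γ₂ B ∈ 𝓝[≠] c)
    (hc : c ∉ resolventSetB dom T Γ₁ Γ₂ B) {μ₀ μt₀ : ℂ} {R₀ Rt₀ : H →L[ℂ] H}
    (hR₀ : IsResolventAt dom T Γ₁ Γ₂ B μ₀ R₀)
    (hRt₀ : IsResolventAt domt Tt Γt₁ Γt₂ (B†) μt₀ Rt₀) {w x : H}
    (hw : w ∈ spaceS domt Tt Γt₁ Γt₂ (B†) μt₀) (hx : x ∈ spaceS dom T Γ₁ Γ₂ B μ₀) :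
    weakResolventB dom T Γ₁ Γ₂ B w x ∈ removableAt c := by
  have hne : ∀ {lam R}, IsResolventAt dom T Γ₁ Γ₂ B lam R → lam ≠ c := fun hR hlam =>
    hc (hlam ▸ ⟨_, hR⟩)
  refine (weakResolventB dom T Γ₁ Γ₂ B).apply_mem_of_mem_span₂ ?_ hw hx
  rintro _ ⟨δt, Rtδ, vt, hRtδ, hvt, rfl⟩ _ ⟨δ, Rδ, v, hRδ, hv, rfl⟩
  have hS := hR₀.of_adjoint hadj hRtδ
  simpa only [adjoint_adjoint] using
    weakResolventB_adjoint_resolvent_mem_removableAt hρ hS (hne hS) <|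
      weakResolventB_apply_resolvent_mem_removableAt hρ hRδ (hne hRδ) <|
        weakResolventB_eigenvector_mem_removableAt hGreen hM hρ (hne hR₀)
          (hne (hR₀.of_adjoint hadj hRt₀)) hv hvt

end BoundaryTriple

theorem stmt7 (dom : Submodule ℂ H) (T : dom →ₗ[ℂ] H)
    (Γ₁ : dom →ₗ[ℂ] 𝓗) (Γ₂ : dom →ₗ[ℂ] 𝓚) (B : 𝓚 →L[ℂ] 𝓗)
    (domt : Submodule ℂ H) (Tt : domt →ₗ[ℂ] H)
    (Γt₁ : domt →ₗ[ℂ] 𝓚) (Γt₂ : domt →ₗ[ℂ] 𝓗)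
    -- Green identity (paper inner products are linear in the first argument;
    -- Mathlib's `⟪·,·⟫_ℂ` is linear in the second, whence the reversed order)
    (hGreen : ∀ (u : dom) (v : domt),
      ⟪(v : H), T u⟫_ℂ - ⟪Tt v, (u : H)⟫_ℂ = ⟪Γt₂ v, Γ₁ u⟫_ℂ - ⟪Γt₁ v, Γ₂ u⟫_ℂ)
    (μ₀ : ℂ) (hμ₀ : μ₀ ∈ resolventSetB dom T Γ₁ Γ₂ B)
    (μt₀ : ℂ)
    (hμt₀ : μt₀ ∈ resolventSetB domt Tt Γt₁ Γt₂ (ContinuousLinearMap.adjoint B))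
    (lam₀ : ℂ)
    (hM : MAnalyticAt dom T Γ₁ Γ₂ B lam₀)
    -- `λ₀` is at worst an isolated singularity of the resolvent
    (r : ℝ) (hr : 0 < r)
    (hpunct : Metric.ball lam₀ r \ {lam₀} ⊆ resolventSetB dom T Γ₁ Γ₂ B)
    -- `Ã_{B*}` is the Hilbert-space adjoint of `A_B`
    (hadj : ∀ v w : H,
      (∃ hv : v ∈ domt, Γt₁ ⟨v, hv⟩ = ContinuousLinearMap.adjoint B (Γt₂ ⟨v, hv⟩) ∧
          Tt ⟨v, hv⟩ = w) ↔
        ∀ u : dom, Γ₁ u = B (Γ₂ u) → ⟪v, T u⟫_ℂ = ⟪w, (u : H)⟫_ℂ) :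
    ∀ Φ ∈ closure (spaceS dom T Γ₁ Γ₂ B μ₀ : Set H),
      ∀ Φt ∈ closure
          (spaceS domt Tt Γt₁ Γt₂ (ContinuousLinearMap.adjoint B) μt₀ : Set H),
        ∃ g : ℂ → ℂ, (∀ z ∈ Metric.ball lam₀ r, AnalyticAt ℂ g z) ∧
          ∀ lam ∈ Metric.ball lam₀ r \ {lam₀},
            ∀ R : H →L[ℂ] H, IsResolventAt dom T Γ₁ Γ₂ B lam R →
              g lam = ⟪Φt, R Φ⟫_ℂ := by
  intro Φ hΦ Φt hΦt
  have hO : IsOpen (ball lam₀ r \ {lam₀}) := isOpen_ball.sdiff isClosed_singleton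
  have hrem : weakResolventB dom T Γ₁ Γ₂ B Φt Φ ∈ removableAt lam₀ := by
    by_cases hlam₀ : lam₀ ∈ resolventSetB dom T Γ₁ Γ₂ B
    · have hball : ball lam₀ r ⊆ resolventSetB dom T Γ₁ Γ₂ B := fun z hz => by
        obtain rfl | hz₀ := eq_or_ne z lam₀
        exacts [hlam₀, hpunct ⟨hz, hz₀⟩]
      exact mem_removableAt_of_analyticAt <|
        (differentiableOn_weakResolventB Φt Φ isOpen_ball hball).analyticAt (ball_mem_nhds _ hr)
    · obtain ⟨R₀, hR₀⟩ := hμ₀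
      obtain ⟨Rt₀, hRt₀⟩ := hμt₀
      have hρ : resolventSetB dom T Γ₁ Γ₂ B ∈ 𝓝[≠] lam₀ :=
        mem_of_superset (sdiff_mem_nhdsWithin_compl (ball_mem_nhds _ hr) _) hpunct
      exact weakResolventB_mem_removableAt_of_mem_closure hr hpunct
        (fun w hw x hx => weakResolventB_mem_removableAt_of_mem_spaceS hGreen hadj hM hρ hlam₀
          hR₀ hRt₀ hw hx) hΦt hΦ
  obtain ⟨g, hg, hgW⟩ := exists_analyticOnNhd_eqOn_of_mem_removableAt isOpen_ball hrem
    (differentiableOn_weakResolventB Φt Φ hO hpunct)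
  refine ⟨g, hg, fun lam hlam R hR => ?_⟩
  rw [hgW hlam, weakResolventB_apply, hR.unique (isResolventAt_resolventB (hpunct hlam))]
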